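/- The hexagonal lattice satisfies the disjoint-union decomposition 𝕋 ∪ (𝕋 + rϖ) ∪ (𝕋 − rϖ) = r𝕋, where r = (√3/3)e^{πi/6}. -/
import Mathlib


open Complex

noncomputable section

/-- `e^{πi/3}`. -/
def τ : ℂ := Complex.exp (Real.pi * Complex.I / 3)

/-- The point `mϖ + n e^{πi/3} ϖ` of the hexagonal lattice with real period `ϖ`. -/
def hexPt (ϖ : ℝ) (p : ℤ × ℤ) : ℂ := p.1 * ϖ + p.2 * τ * ϖ

/-- The hexagonal lattice `𝕋 = ℤϖ + ℤ e^{πi/3} ϖ`. -/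
def hexLattice (ϖ : ℝ) : Set ℂ := Set.range (hexPt ϖ)

/-- The real fundamental period `ϖ = Γ(1/3)³/(2π)`. -/
def ϖ₀ : ℝ := (Real.Gamma (1/3))^3 / (2 * Real.pi)

/-- The Weierstrass `℘`-function of the hexagonal lattice `𝕋 = ℤϖ₀ + ℤ e^{πi/3} ϖ₀`,
i.e. the `℘`-function with invariants `g₂ = 0`, `g₃ = 1`. -/
def wp (z : ℂ) : ℂ :=
  1 / z ^ 2 + ∑' p : {p : ℤ × ℤ // p ≠ 0}, (1 / (z - hexPt ϖ₀ p) ^ 2 - 1 / (hexPt ϖ₀ p) ^ 2)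

/-- The Weierstrass `σ`-function of the hexagonal lattice with real period `ϖ`. -/
def wSigma (ϖ : ℝ) (z : ℂ) : ℂ :=
  z * ∏' p : {p : ℤ × ℤ // p ≠ 0},
    ((1 - z / hexPt ϖ p) * Complex.exp (z / hexPt ϖ p + z ^ 2 / (2 * (hexPt ϖ p) ^ 2)))

/-- The Weierstrass `ζ`-function of the hexagonal lattice with real period `ϖ`. -/
def wZeta (ϖ : ℝ) (z : ℂ) : ℂ :=
  1 / z + ∑' p : {p : ℤ × ℤ // p ≠ 0},
    (1 / (z - hexPt ϖ p) + 1 / hexPt ϖ p + z / (hexPt ϖ p) ^ 2)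

/-- `r = (√3/3) e^{πi/6}`. -/
def rr : ℂ := (Real.sqrt 3 / 3 : ℝ) * Complex.exp (Real.pi * Complex.I / 6)


lemma sqrt3_sq' : (Real.sqrt 3 : ℂ) * Real.sqrt 3 = 3 := by
  norm_cast
  exact Real.mul_self_sqrt (by norm_num)

lemma tau_eq : τ = (1/2 : ℂ) + (Real.sqrt 3 / 2 : ℝ) * I := by
  unfold τ
  rw [show (↑Real.pi * I / 3 : ℂ) = ((Real.pi/3 : ℝ):ℂ) * I by push_cast; ring,
    Complex.exp_mul_I, ← Complex.ofReal_cos, ← Complex.ofReal_sin,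
    Real.cos_pi_div_three, Real.sin_pi_div_three]
  push_cast
  ring

lemma rr_eq : rr = (1 + τ)/3 := by
  unfold rr
  rw [show (↑Real.pi * I / 6 : ℂ) = ((Real.pi/6 : ℝ):ℂ) * I by push_cast; ring,
    Complex.exp_mul_I, ← Complex.ofReal_cos, ← Complex.ofReal_sin,
    Real.cos_pi_div_six, Real.sin_pi_div_six, tau_eq]
  push_cast
  linear_combination (1/6 : ℂ) * sqrt3_sq'

lemma tau_sq : τ^2 - τ + 1 = 0 := by
  rw [tau_eq]
  push_cast
  linear_combination ((Real.sqrt 3:ℂ)^2/4) * Complex.I_sq - (1/4) * sqrt3_sq'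

lemma indep (x y : ℝ) (h : (x:ℂ) + (y:ℂ) * τ = 0) : x = 0 ∧ y = 0 := by
  rw [tau_eq] at h
  have him := congrArg Complex.im h
  have hre := congrArg Complex.re h
  simp at him hre
  exact ⟨by simpa [him] using hre, him⟩

lemma key (ϖ : ℝ) (a b : ℤ) : rr * hexPt ϖ (a, b)
    = ((a - b : ℤ) : ℂ)/3 * ϖ + ((a + 2*b : ℤ) : ℂ)/3 * τ * ϖ := by
  rw [rr_eq]
  simp only [hexPt]
  push_cast
  linear_combination ((b : ℂ) * ϖ / 3) * tau_sq

/-- the disjoint-union decomposition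
`𝕋 ∪ (𝕋 + rϖ) ∪ (𝕋 − rϖ) = r𝕋`. -/
theorem lattice_decomposition (ϖ : ℝ) (hϖ : 0 < ϖ) :
    (hexLattice ϖ ∪ ((fun z => z + rr * ϖ) '' hexLattice ϖ)
        ∪ ((fun z => z - rr * ϖ) '' hexLattice ϖ)
      = (fun z => rr * z) '' hexLattice ϖ) ∧
    Disjoint (hexLattice ϖ) ((fun z => z + rr * ϖ) '' hexLattice ϖ) ∧
    Disjoint (hexLattice ϖ) ((fun z => z - rr * ϖ) '' hexLattice ϖ) ∧
    Disjoint ((fun z => z + rr * ϖ) '' hexLattice ϖ)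
      ((fun z => z - rr * ϖ) '' hexLattice ϖ) := by
  have hϖc : (ϖ : ℂ) ≠ 0 := by exact_mod_cast hϖ.ne'
  refine ⟨?_, ?_, ?_, ?_⟩
  · ext z
    simp only [hexLattice, Set.mem_union, Set.mem_image, Set.mem_range]
    constructor
    · rintro ((⟨⟨m, n⟩, rfl⟩ | ⟨_, ⟨⟨m, n⟩, rfl⟩, rfl⟩) | ⟨_, ⟨⟨m, n⟩, rfl⟩, rfl⟩)
      · exact ⟨_, ⟨(2*m+n, n-m), rfl⟩, by rw [key]; simp only [hexPt]; push_cast; ring⟩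
      · exact ⟨_, ⟨(2*m+n+1, n-m), rfl⟩, by
          rw [key, rr_eq]; simp only [hexPt]; push_cast; ring⟩
      · exact ⟨_, ⟨(2*m+n-1, n-m), rfl⟩, by
          rw [key, rr_eq]; simp only [hexPt]; push_cast; ring⟩
    · rintro ⟨_, ⟨⟨a, b⟩, rfl⟩, rfl⟩
      have h3 : (a-b) % 3 = 0 ∨ (a-b) % 3 = 1 ∨ (a-b) % 3 = 2 := by omega
      rcases h3 with h3 | h3 | h3
      · obtain ⟨m, rfl⟩ : ∃ m, a = 3*m + b := ⟨(a-b)/3, by omega⟩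
        exact Or.inl (Or.inl ⟨(m, m+b), by rw [key]; simp only [hexPt]; push_cast; ring⟩)
      · obtain ⟨m, rfl⟩ : ∃ m, a = 3*m + b + 1 := ⟨(a-b-1)/3, by omega⟩
        refine Or.inl (Or.inr ⟨hexPt ϖ (m, m+b), ⟨(m, m+b), rfl⟩, ?_⟩)
        rw [key, rr_eq]; simp only [hexPt]; push_cast; ring
      · obtain ⟨m, rfl⟩ : ∃ m, a = 3*m + b - 1 := ⟨(a-b+1)/3, by omega⟩
        refine Or.inr ⟨hexPt ϖ (m, m+b), ⟨(m, m+b), rfl⟩, ?_⟩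
        rw [key, rr_eq]; simp only [hexPt]; push_cast; ring
  · rw [Set.disjoint_left]
    rintro z ⟨⟨m, n⟩, rfl⟩ ⟨_, ⟨⟨m', n'⟩, rfl⟩, h⟩
    have h3 : ((((m:ℝ) - m' - 1/3 : ℝ)) : ℂ) + (((n:ℝ) - n' - 1/3 : ℝ) : ℂ) * τ = 0 := by
      apply mul_right_cancel₀ hϖc
      rw [rr_eq] at h
      simp only [hexPt] at h
      push_cast
      linear_combination -h
    obtain ⟨hx, -⟩ := indep _ _ h3
    have h4 : (3*(m - m') : ℤ) = 1 := by
      have : ((3*(m - m') : ℤ) : ℝ) = 1 := by push_cast; linarith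
      exact_mod_cast this
    omega
  · rw [Set.disjoint_left]
    rintro z ⟨⟨m, n⟩, rfl⟩ ⟨_, ⟨⟨m', n'⟩, rfl⟩, h⟩
    have h3 : ((((m:ℝ) - m' + 1/3 : ℝ)) : ℂ) + (((n:ℝ) - n' + 1/3 : ℝ) : ℂ) * τ = 0 := by
      apply mul_right_cancel₀ hϖc
      rw [rr_eq] at h
      simp only [hexPt] at h
      push_cast
      linear_combination -h
    obtain ⟨hx, -⟩ := indep _ _ h3
    have h4 : (3*(m - m') : ℤ) = -1 := by
      have : ((3*(m - m') : ℤ) : ℝ) = -1 := by push_cast; linarith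
      exact_mod_cast this
    omega
  · rw [Set.disjoint_left]
    rintro z ⟨_, ⟨⟨m, n⟩, rfl⟩, rfl⟩ ⟨_, ⟨⟨m', n'⟩, rfl⟩, h⟩
    have h3 : ((((m:ℝ) - m' + 2/3 : ℝ)) : ℂ) + (((n:ℝ) - n' + 2/3 : ℝ) : ℂ) * τ = 0 := by
      apply mul_right_cancel₀ hϖc
      rw [rr_eq] at h
      simp only [hexPt] at h
      push_cast
      linear_combination -h
    obtain ⟨hx, -⟩ := indep _ _ h3
    have h4 : (3*(m - m') : ℤ) = -2 := by
      have : ((3*(m - m') : ℤ) : ℝ) = -2 := by push_cast; linarith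
      exact_mod_cast this
    omega
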